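/- arXiv:1403.3514 — 2 statements merged into one kernel-verified Lean document; each statement's English description precedes it below -/
import Mathlib

section
/- With [s]_x = 1 - x^s, T_s = T [s]_x [s+3]_x / ([s+1]_x [s+2]_x), T = (1+4x+x^2)/(1+x+x^2), g = x(1+x+x^2)/(1+4x+x^2)^2, and X_{s,t} = ([3]_x [s+1]_x [t+1]_x [s+t+3]_x)/([1]_x [s+3]_x [t+3]_x [s+t+1]_x), the identity X_{s,t} = 1 + g T_s T_t X_{s,t} + g^2 T_s T_t X_{s,t} T_{s+1} T_{t+1} X_{s+1,t+1} holds as an identity of rational functions in x, for all natural numbers s, t. -/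
noncomputable section

/-- The field of rational functions in one variable over ℚ. -/
abbrev K := RatFunc ℚ

/-- The formal variable x. -/
def x : K := RatFunc.X

/-- [s]_x = 1 - x^s. -/
def br (s : ℕ) : K := 1 - x ^ s

/-- T = (1+4x+x²)/(1+x+x²). -/
def T : K := (1 + 4 * x + x ^ 2) / (1 + x + x ^ 2)

/-- g = x(1+x+x²)/(1+4x+x²)². -/
def g : K := x * (1 + x + x ^ 2) / (1 + 4 * x + x ^ 2) ^ 2

/-- T_s = T [s]_x [s+3]_x / ([s+1]_x [s+2]_x). -/
def Ts (s : ℕ) : K := T * br s * br (s + 3) / (br (s + 1) * br (s + 2))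

/-- N_{s,t}. -/
def N (s t : ℕ) : K :=
  br 3 * br (s + 2) * br (t + 2) * br (s + t + 3) /
    (br 2 * br (s + 3) * br (t + 3) * br (s + t + 2))

/-- X_{s,t}. -/
def Xc (s t : ℕ) : K :=
  br 3 * br (s + 1) * br (t + 1) * br (s + t + 3) /
    (br 1 * br (s + 3) * br (t + 3) * br (s + t + 1))

/-! Since `g T² = x / (1 + x + x²) = x [1]_x / [3]_x`, the product `g T_s T_t X_{s,t}` collapses
to `x [s]_x [t]_x [s+t+3]_x / ([s+2]_x [t+2]_x [s+t+1]_x)`. The quadratic term of the recursion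
is the product of two such factors, at `(s, t)` and `(s+1, t+1)`, and the recursion becomes an
identity between rational functions in `x`, `x ^ s` and `x ^ t`. -/

lemma RatFunc.algebraMap_ne_zero_of_eval_zero_ne_zero {F : Type*} [Field F] {p : Polynomial F}
    (h : p.eval 0 ≠ 0) : algebraMap (Polynomial F) (RatFunc F) p ≠ 0 :=
  RatFunc.algebraMap_ne_zero fun hp => h (by simp [hp])

lemma br_ne_zero {n : ℕ} (hn : n ≠ 0) : br n ≠ 0 := by
  have h := RatFunc.algebraMap_ne_zero_of_eval_zero_ne_zero
    (p := (1 - Polynomial.X ^ n : Polynomial ℚ)) (by simp [hn])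
  simpa [br, x] using h

lemma one_add_x_add_x_sq_ne_zero : (1 : K) + x + x ^ 2 ≠ 0 := by
  have h := RatFunc.algebraMap_ne_zero_of_eval_zero_ne_zero
    (p := (1 + Polynomial.X + Polynomial.X ^ 2 : Polynomial ℚ)) (by simp)
  simpa [x] using h

lemma one_add_four_x_add_x_sq_ne_zero : (1 : K) + 4 * x + x ^ 2 ≠ 0 := by
  have h := RatFunc.algebraMap_ne_zero_of_eval_zero_ne_zero
    (p := (1 + 4 * Polynomial.X + Polynomial.X ^ 2 : Polynomial ℚ)) (by simp)
  simpa [x, map_ofNat] using h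

lemma g_mul_T_sq : g * T ^ 2 = x / (1 + x + x ^ 2) := by
  have h₁ := one_add_x_add_x_sq_ne_zero
  have h₄ := one_add_four_x_add_x_sq_ne_zero
  rw [g, T, div_pow, div_mul_div_comm,
    div_eq_div_iff (mul_ne_zero (pow_ne_zero 2 h₄) (pow_ne_zero 2 h₁)) h₁]
  ring

lemma br_three : br 3 = br 1 * (1 + x + x ^ 2) := by
  simp only [br]
  ring

lemma g_mul_Ts_mul_Ts_mul_Xc (s t : ℕ) :
    g * Ts s * Ts t * Xc s t
      = x * br s * br t * br (s + t + 3) / (br (s + 2) * br (t + 2) * br (s + t + 1)) := by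
  have := one_add_x_add_x_sq_ne_zero
  have : br 1 ≠ 0 := br_ne_zero one_ne_zero
  have : br (s + 1) ≠ 0 := br_ne_zero (by omega)
  have : br (s + 3) ≠ 0 := br_ne_zero (by omega)
  have : br (t + 1) ≠ 0 := br_ne_zero (by omega)
  have : br (t + 3) ≠ 0 := br_ne_zero (by omega)
  calc g * Ts s * Ts t * Xc s t
      = g * T ^ 2 * (br 3 / br 1) * (br s * br t * br (s + t + 3)) /
          (br (s + 2) * br (t + 2) * br (s + t + 1)) := by
        simp only [Ts, Xc]
        field_simp
    _ = _ := by
        rw [g_mul_T_sq, br_three]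
        field_simp

theorem X_recursion (s t : ℕ) :
    Xc s t = 1 + g * Ts s * Ts t * Xc s t
      + g ^ 2 * Ts s * Ts t * Xc s t * Ts (s + 1) * Ts (t + 1) * Xc (s + 1) (t + 1) := by
  have hsplit : g ^ 2 * Ts s * Ts t * Xc s t * Ts (s + 1) * Ts (t + 1) * Xc (s + 1) (t + 1)
      = (g * Ts s * Ts t * Xc s t) * (g * Ts (s + 1) * Ts (t + 1) * Xc (s + 1) (t + 1)) := by
    ring
  rw [hsplit, g_mul_Ts_mul_Ts_mul_Xc, g_mul_Ts_mul_Ts_mul_Xc,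
    show s + 1 + (t + 1) + 3 = s + t + 5 by omega, show s + 1 + (t + 1) + 1 = s + t + 3 by omega]
  have : br 1 ≠ 0 := br_ne_zero one_ne_zero
  have : br (s + 2) ≠ 0 := br_ne_zero (by omega)
  have : br (s + 3) ≠ 0 := br_ne_zero (by omega)
  have : br (t + 2) ≠ 0 := br_ne_zero (by omega)
  have : br (t + 3) ≠ 0 := br_ne_zero (by omega)
  have : br (s + t + 1) ≠ 0 := br_ne_zero (by omega)
  have : br (s + t + 3) ≠ 0 := br_ne_zero (by omega)
  simp only [Xc]
  field_simp
  simp only [br]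
  ring
end
end

section
/- Let M be a finite connected graph with two distinguished distinct vertices v₁, v₂ at graph distance d(v₁,v₂) = s+t, where s, t are positive integers. Then the labelling ℓ₀(v) = min(d(v,v₁) − s, d(v,v₂) − t) is the unique integer labelling ℓ of the vertices of M such that: (i) |ℓ(v) − ℓ(w)| ≤ 1 for every edge {v,w}; (ii) v₁ and v₂ are the only local minima of ℓ (i.e., the only vertices whose label is not larger than all their neighbours' labels); (iii) ℓ(v₁) = −s and ℓ(v₂) = −t. -/
/-!
Every labelling `ℓ` with `|ℓ v - ℓ w| ≤ 1` along edges and `ℓ v₁ = -s`, `ℓ v₂ = -t` satisfies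
`ℓ ≤ ℓ₀` by the triangle inequality along shortest walks. Conversely, a vertex minimising `ℓ`
on `{ℓ < ℓ₀}` is a local minimum of `ℓ` (a smaller neighbour would also lie in that set, since
`ℓ₀` is 1-Lipschitz), so it is `v₁` or `v₂`, where `ℓ = ℓ₀`; finiteness of `M` makes the minimum
exist. That `ℓ₀` itself has exactly the local minima `v₁`, `v₂` comes from the fact that a
distance function `d(·, u)` has no local minimum other than `u`.
-/

/-- A vertex is a local minimum of a labelling if its label is not larger than those of all
its neighbours. -/
def IsLocalMinLabel {V : Type*} (G : SimpleGraph V) (l : V → ℤ) (v : V) : Prop :=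
  ∀ w, G.Adj v w → l v ≤ l w

namespace SimpleGraph

variable {V : Type*} {G : SimpleGraph V}

lemma Walk.abs_sub_le_length {l : V → ℤ} (hl : ∀ v w, G.Adj v w → |l v - l w| ≤ 1)
    {u v : V} (p : G.Walk u v) : |l u - l v| ≤ p.length := by
  induction p with
  | nil => simp
  | @cons a b c hab p ih =>
    rw [Walk.length_cons, Nat.cast_succ]
    calc |l a - l c| ≤ |l a - l b| + |l b - l c| := abs_sub_le _ _ _
      _ ≤ p.length + 1 := by linarith [hl a b hab]

lemma Connected.abs_sub_le_dist (hconn : G.Connected) {l : V → ℤ}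
    (hl : ∀ v w, G.Adj v w → |l v - l w| ≤ 1) (u v : V) : |l u - l v| ≤ G.dist u v := by
  obtain ⟨p, hp⟩ := hconn.exists_walk_length_eq_dist u v
  exact hp ▸ p.abs_sub_le_length hl

lemma Adj.abs_dist_sub_dist_le_one {v w : V} (hadj : G.Adj v w) (u : V) :
    |(G.dist v u : ℤ) - G.dist w u| ≤ 1 := by
  rw [dist_comm, dist_comm (u := w), abs_sub_le_iff]
  rcases hadj.diff_dist_adj (u := u) with h | h | h <;> omega

lemma Reachable.exists_adj_dist_lt {u v : V} (h : G.Reachable v u) (hne : v ≠ u) :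
    ∃ w, G.Adj v w ∧ G.dist w u < G.dist v u := by
  obtain ⟨p, hp⟩ := h.exists_walk_length_eq_dist
  cases p with
  | nil => exact absurd rfl hne
  | cons hadj q =>
    refine ⟨_, hadj, ?_⟩
    rw [← hp, Walk.length_cons]
    exact Nat.lt_succ_of_le (dist_le q)

end SimpleGraph

open SimpleGraph

section LocalMin

variable {V : Type*} {G : SimpleGraph V}

lemma IsLocalMinLabel.eq_of_dist_sub (hconn : G.Connected) {u v : V} {c : ℤ}
    (h : IsLocalMinLabel G (fun x => (G.dist x u : ℤ) - c) v) : v = u := by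
  by_contra hne
  obtain ⟨w, hadj, hw⟩ := (hconn.preconnected v u).exists_adj_dist_lt hne
  have : (G.dist v u : ℤ) - c ≤ G.dist w u - c := h w hadj
  omega

lemma IsLocalMinLabel.of_min {f g : V → ℤ} {v : V}
    (h : IsLocalMinLabel G (fun x => min (f x) (g x)) v) :
    IsLocalMinLabel G f v ∨ IsLocalMinLabel G g v := by
  by_contra! hfg
  obtain ⟨⟨w, hadj, hw⟩, ⟨w', hadj', hw'⟩⟩ :
      (∃ w, G.Adj v w ∧ f w < f v) ∧ ∃ w, G.Adj v w ∧ g w < g v := by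
    simpa [IsLocalMinLabel] using hfg
  have : min (f v) (g v) ≤ min (f w) (g w) := h w hadj
  have : min (f v) (g v) ≤ min (f w') (g w') := h w' hadj'
  omega

lemma le_of_forall_isLocalMinLabel [Finite V] {f l : V → ℤ}
    (hf : ∀ v w, G.Adj v w → |f v - f w| ≤ 1) (h : ∀ v, IsLocalMinLabel G l v → f v ≤ l v)
    (v : V) : f v ≤ l v := by
  by_contra! hv
  obtain ⟨x, hx, hmin⟩ :=
    Set.exists_min_image {x | l x < f x} l (Set.toFinite _) ⟨v, hv⟩
  have hx' : l x < f x := hx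
  refine (h x fun w hadj => ?_).not_gt hx'
  by_contra! hw
  have := abs_sub_le_iff.mp (hf x w hadj)
  exact (hmin w (show l w < f w by omega)).not_gt hw

end LocalMin

section StLabelling

variable {V : Type*} {G : SimpleGraph V} {v₁ v₂ : V} {s t : ℕ}

/-- The labelling `ℓ₀`. -/
noncomputable def stLabelling (G : SimpleGraph V) (v₁ v₂ : V) (s t : ℕ) (v : V) : ℤ :=
  min ((G.dist v v₁ : ℤ) - s) ((G.dist v v₂ : ℤ) - t)

lemma stLabelling_comm : stLabelling G v₁ v₂ s t = stLabelling G v₂ v₁ t s :=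
  funext fun _ => min_comm _ _

lemma abs_stLabelling_sub_le {v w : V} (hadj : G.Adj v w) :
    |stLabelling G v₁ v₂ s t v - stLabelling G v₁ v₂ s t w| ≤ 1 := by
  refine (abs_min_sub_min_le_max _ _ _ _).trans (max_le ?_ ?_) <;>
    rw [sub_sub_sub_cancel_right]
  exacts [hadj.abs_dist_sub_dist_le_one v₁, hadj.abs_dist_sub_dist_le_one v₂]

lemma stLabelling_left (hdist : G.dist v₁ v₂ = s + t) : stLabelling G v₁ v₂ s t v₁ = -s := by
  simp only [stLabelling, dist_self, hdist]
  omega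

lemma stLabelling_right (hdist : G.dist v₁ v₂ = s + t) : stLabelling G v₁ v₂ s t v₂ = -t := by
  rw [stLabelling_comm]
  exact stLabelling_left (by rw [dist_comm, hdist, add_comm])

lemma isLocalMinLabel_stLabelling_left (hconn : G.Connected) (hs : 0 < s)
    (hdist : G.dist v₁ v₂ = s + t) : IsLocalMinLabel G (stLabelling G v₁ v₂ s t) v₁ := by
  intro w hadj
  have hw₁ : G.dist w v₁ = 1 := dist_eq_one_iff_adj.mpr hadj.symm
  have hw₂ : s + t ≤ 1 + G.dist w v₂ :=
    hdist ▸ dist_eq_one_iff_adj.mpr hadj ▸ hconn.dist_triangle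
  rw [stLabelling_left hdist]
  simp only [stLabelling, le_min_iff]
  omega

lemma isLocalMinLabel_stLabelling_iff (hconn : G.Connected) (hs : 0 < s) (ht : 0 < t)
    (hdist : G.dist v₁ v₂ = s + t) (v : V) :
    IsLocalMinLabel G (stLabelling G v₁ v₂ s t) v ↔ v = v₁ ∨ v = v₂ := by
  refine ⟨fun h => h.of_min.imp (·.eq_of_dist_sub hconn) (·.eq_of_dist_sub hconn), ?_⟩
  rintro (rfl | rfl)
  · exact isLocalMinLabel_stLabelling_left hconn hs hdist
  · rw [stLabelling_comm]
    exact isLocalMinLabel_stLabelling_left hconn ht (by rw [dist_comm, hdist, add_comm])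

lemma le_stLabelling (hconn : G.Connected) {l : V → ℤ}
    (hl : ∀ v w, G.Adj v w → |l v - l w| ≤ 1) (h₁ : l v₁ = -s) (h₂ : l v₂ = -t) (v : V) :
    l v ≤ stLabelling G v₁ v₂ s t v := by
  have hd₁ := abs_sub_le_iff.mp (hconn.abs_sub_le_dist hl v v₁)
  have hd₂ := abs_sub_le_iff.mp (hconn.abs_sub_le_dist hl v v₂)
  simp only [stLabelling, le_min_iff]
  omega

lemma eq_stLabelling [Finite V] (hconn : G.Connected) (hdist : G.dist v₁ v₂ = s + t)
    {l : V → ℤ} (hl : ∀ v w, G.Adj v w → |l v - l w| ≤ 1)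
    (hloc : ∀ v, IsLocalMinLabel G l v ↔ v = v₁ ∨ v = v₂) (h₁ : l v₁ = -s) (h₂ : l v₂ = -t) :
    l = stLabelling G v₁ v₂ s t := by
  refine funext fun v => (le_stLabelling hconn hl h₁ h₂ v).antisymm <|
    le_of_forall_isLocalMinLabel (fun _ _ => abs_stLabelling_sub_le) (fun x hx => ?_) v
  rcases (hloc x).mp hx with rfl | rfl
  · exact (stLabelling_left hdist).trans h₁.symm |>.le
  · exact (stLabelling_right hdist).trans h₂.symm |>.le

end StLabelling

theorem unique_st_well_labelling_general {V : Type*} [Fintype V] (G : SimpleGraph V)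
    (hconn : G.Connected) (v₁ v₂ : V) (s t : ℕ)
    (hs : 0 < s) (ht : 0 < t) (hdist : G.dist v₁ v₂ = s + t) :
    (∀ v w, G.Adj v w →
        |(min ((G.dist v v₁ : ℤ) - s) ((G.dist v v₂ : ℤ) - t)) -
          (min ((G.dist w v₁ : ℤ) - s) ((G.dist w v₂ : ℤ) - t))| ≤ 1) ∧
    (∀ v, IsLocalMinLabel G
        (fun v => min ((G.dist v v₁ : ℤ) - s) ((G.dist v v₂ : ℤ) - t)) v ↔
        v = v₁ ∨ v = v₂) ∧
    (min ((G.dist v₁ v₁ : ℤ) - s) ((G.dist v₁ v₂ : ℤ) - t) = -s) ∧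
    (min ((G.dist v₂ v₁ : ℤ) - s) ((G.dist v₂ v₂ : ℤ) - t) = -t) ∧
    (∀ l : V → ℤ,
      (∀ v w, G.Adj v w → |l v - l w| ≤ 1) →
      (∀ v, IsLocalMinLabel G l v ↔ v = v₁ ∨ v = v₂) →
      l v₁ = -s → l v₂ = -t →
      l = fun v => min ((G.dist v v₁ : ℤ) - s) ((G.dist v v₂ : ℤ) - t)) :=
  ⟨fun _ _ => abs_stLabelling_sub_le, isLocalMinLabel_stLabelling_iff hconn hs ht hdist,
    stLabelling_left hdist, stLabelling_right hdist,
    fun _ hl hloc h₁ h₂ => eq_stLabelling hconn hdist hl hloc h₁ h₂⟩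

theorem unique_st_well_labelling {V : Type*} [Fintype V] (G : SimpleGraph V)
    (hconn : G.Connected) (v₁ v₂ : V) (hne : v₁ ≠ v₂) (s t : ℕ)
    (hs : 0 < s) (ht : 0 < t) (hdist : G.dist v₁ v₂ = s + t) :
    (∀ v w, G.Adj v w →
        |(min ((G.dist v v₁ : ℤ) - s) ((G.dist v v₂ : ℤ) - t)) -
          (min ((G.dist w v₁ : ℤ) - s) ((G.dist w v₂ : ℤ) - t))| ≤ 1) ∧
    (∀ v, IsLocalMinLabel G
        (fun v => min ((G.dist v v₁ : ℤ) - s) ((G.dist v v₂ : ℤ) - t)) v ↔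
        v = v₁ ∨ v = v₂) ∧
    (min ((G.dist v₁ v₁ : ℤ) - s) ((G.dist v₁ v₂ : ℤ) - t) = -s) ∧
    (min ((G.dist v₂ v₁ : ℤ) - s) ((G.dist v₂ v₂ : ℤ) - t) = -t) ∧
    (∀ l : V → ℤ,
      (∀ v w, G.Adj v w → |l v - l w| ≤ 1) →
      (∀ v, IsLocalMinLabel G l v ↔ v = v₁ ∨ v = v₂) →
      l v₁ = -s → l v₂ = -t →
      l = fun v => min ((G.dist v v₁ : ℤ) - s) ((G.dist v v₂ : ℤ) - t)) :=
  unique_st_well_labelling_general G hconn v₁ v₂ s t hs ht hdist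
end
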